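/- arXiv:1507.03245 — 5 statements merged into one kernel-verified Lean document; each statement's English description precedes it below -/
import Mathlib

section
/- If D is a closed convex subset of ℝ^n, X is a random vector with P(X ∈ D) = 1, E[X] exists, and E[X] lies on the boundary of D, then there exist a nonzero vector α ∈ ℝ^n and a constant β ∈ ℝ such that P(⟨X, α⟩ + β = 0) = 1. -/
/-!
A nonzero vector `α` supports `D` at the boundary point `E[X]`, so `⟪X, α⟫ ≤ ⟪E[X], α⟫` almost
surely. Both sides have the same expectation, hence they agree almost surely, and `X` lies on the
hyperplane `⟪x, α⟫ = ⟪E[X], α⟫`. The supporting vector comes from Hahn–Banach separation when `D`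
has interior points; otherwise `D` spans a proper affine subspace and any nonzero normal vector of
that subspace works.
-/

open MeasureTheory ProbabilityTheory
open scoped RealInnerProductSpace

section SupportingVector

variable {E : Type*} [NormedAddCommGroup E] [InnerProductSpace ℝ E] {D : Set E} {x : E}

lemma Convex.exists_ne_zero_inner_le_of_notMem_interior [CompleteSpace E] (hD : Convex ℝ D)
    (hx : x ∉ interior D) (hint : (interior D).Nonempty) :
    ∃ α : E, α ≠ 0 ∧ ∀ a ∈ D, ⟪a, α⟫ ≤ ⟪x, α⟫ := by
  obtain ⟨f, hf, hmax⟩ := geometric_hahn_banach_of_nonempty_interior_point hD hx hint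
  set α := (InnerProductSpace.toDual ℝ E).symm f
  have hαf : ∀ y, ⟪y, α⟫ = f y := fun y => by
    rw [real_inner_comm, InnerProductSpace.toDual_symm_apply]
  exact ⟨α, by simpa [α] using hf, fun a ha => by simpa only [hαf] using hmax a ha⟩

variable [FiniteDimensional ℝ E]

lemma Convex.exists_ne_zero_inner_eq_of_interior_eq_empty (hD : Convex ℝ D)
    (hint : interior D = ∅) (hx : x ∈ closure D) :
    ∃ α : E, α ≠ 0 ∧ ∀ a ∈ D, ⟪a, α⟫ = ⟪x, α⟫ := by
  have hspan : affineSpan ℝ D ≠ ⊤ := by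
    rw [Ne, ← hD.interior_nonempty_iff_affineSpan_eq_top, hint]
    exact Set.not_nonempty_empty
  have hxspan : x ∈ affineSpan ℝ D :=
    closure_minimal (subset_affineSpan ℝ D) (affineSpan ℝ D).closed_of_finiteDimensional hx
  have hdir : (affineSpan ℝ D).direction ≠ ⊤ := by
    rwa [Ne, AffineSubspace.direction_eq_top_iff_of_nonempty ⟨x, hxspan⟩]
  obtain ⟨α, hαperp, hα⟩ := Submodule.exists_mem_ne_zero_of_ne_bot
    (mt Submodule.orthogonal_eq_bot_iff.1 hdir)
  refine ⟨α, hα, fun a ha => ?_⟩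
  have hax : a -ᵥ x ∈ (affineSpan ℝ D).direction :=
    AffineSubspace.vsub_mem_direction (subset_affineSpan ℝ D ha) hxspan
  rw [← sub_eq_zero, ← inner_sub_left]
  exact Submodule.inner_right_of_mem_orthogonal hax hαperp

lemma Convex.exists_ne_zero_inner_le_of_mem_frontier (hD : Convex ℝ D) (hx : x ∈ frontier D) :
    ∃ α : E, α ≠ 0 ∧ ∀ a ∈ D, ⟪a, α⟫ ≤ ⟪x, α⟫ := by
  rcases (interior D).eq_empty_or_nonempty with hint | hint
  · obtain ⟨α, hα, heq⟩ := hD.exists_ne_zero_inner_eq_of_interior_eq_empty hint hx.1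
    exact ⟨α, hα, fun a ha => (heq a ha).le⟩
  · exact hD.exists_ne_zero_inner_le_of_notMem_interior hx.2 hint

end SupportingVector

lemma ae_eq_integral_of_ae_le_integral {Ω : Type*} [MeasurableSpace Ω] {μ : Measure Ω}
    [IsProbabilityMeasure μ] {Y : Ω → ℝ} (hY : Integrable Y μ)
    (hle : ∀ᵐ ω ∂μ, Y ω ≤ ∫ ω, Y ω ∂μ) : ∀ᵐ ω ∂μ, Y ω = ∫ ω, Y ω ∂μ :=
  (integral_eq_iff_of_ae_le hY (integrable_const _) hle).1 (by simp)

theorem exists_supporting_hyperplane_of_mean_frontier {Ω : Type*} [MeasureSpace Ω]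
    [IsProbabilityMeasure (ℙ : Measure Ω)] {n : ℕ}
    (D : Set (EuclideanSpace ℝ (Fin n))) (hDclosed : IsClosed D) (hDconv : Convex ℝ D)
    (X : Ω → EuclideanSpace ℝ (Fin n)) (hX : Integrable X)
    (h : ℙ {ω | X ω ∈ D} = 1)
    (hfront : (∫ ω, X ω) ∈ frontier D) :
    ∃ (α : EuclideanSpace ℝ (Fin n)) (β : ℝ), α ≠ 0 ∧
      ℙ {ω | ⟪X ω, α⟫ + β = 0} = 1 := by
  have hXD : ∀ᵐ ω, X ω ∈ D :=
    (mem_ae_iff_prob_eq_one₀ (hX.aemeasurable.nullMeasurable hDclosed.measurableSet)).2 h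
  obtain ⟨α, hα, hsupp⟩ := hDconv.exists_ne_zero_inner_le_of_mem_frontier hfront
  have hmean : ∫ ω, ⟪X ω, α⟫ = ⟪∫ ω, X ω, α⟫ := by
    simpa only [real_inner_comm α] using integral_inner hX α
  have hle : ∀ᵐ ω, ⟪X ω, α⟫ ≤ ∫ ω, ⟪X ω, α⟫ := by
    filter_upwards [hXD] with ω hω
    rw [hmean]
    exact hsupp _ hω
  refine ⟨α, -⟪∫ ω, X ω, α⟫, hα, ?_⟩
  rw [← measure_univ (μ := (ℙ : Measure Ω))]
  refine measure_congr (Filter.eventuallyEq_univ.2 ?_)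
  filter_upwards [ae_eq_integral_of_ae_le_integral (hX.inner_const α) hle] with ω hω
  rw [hω, hmean, add_neg_cancel]
end

section
/- A convex set D in ℝ^n contains the expectation of every integrable random vector almost surely contained in D; that is, if D is convex, P(X ∈ D) = 1 and E[X] exists, then E[X] ∈ D. The set D need not be closed. -/
/-!
Suppose `m = E[X] ∉ D`. If `D` has nonempty interior, it has a supporting hyperplane `f ≤ f m`
at `m`; since `E[f X] = f m`, the variable `X` lies a.s. on the hyperplane `f = f m`. Otherwise
`D` spans a proper affine subspace. Either way `X` lies a.s. in a proper affine subspace `p + V`,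
and induction on the dimension, applied to `X - p` as a `V`-valued variable and to the convex set
`(D - p) ∩ V`, gives `m ∈ D`. The event `{X ∈ D}` need not be measurable, so `P(X ∈ D) = 1` is
only ever turned into an almost-sure statement about a closed set containing `D`.
-/

open MeasureTheory ProbabilityTheory

section

variable {Ω E : Type*} [MeasurableSpace Ω] {μ : Measure Ω} {D : Set E} {X : Ω → E}

theorem nonempty_of_measure_setOf_mem_eq_one (h : μ {ω | X ω ∈ D} = 1) : D.Nonempty :=
  Set.nonempty_iff_ne_empty.2 fun hD => by simp [hD] at h

variable [NormedAddCommGroup E]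

theorem ae_mem_of_measure_setOf_mem_eq_one [IsProbabilityMeasure μ] {s : Set E}
    (hs : IsClosed s) (hDs : D ⊆ s) (hX : AEStronglyMeasurable X μ)
    (h : μ {ω | X ω ∈ D} = 1) : ∀ᵐ ω ∂μ, X ω ∈ s := by
  borelize E
  rw [ae_iff_measure_eq (hX.aemeasurable.nullMeasurable hs.measurableSet), measure_univ]
  exact le_antisymm prob_le_one (h ▸ measure_mono fun ω hω => hDs hω)

variable [NormedSpace ℝ E]

theorem MeasureTheory.Integrable.exists_lift_submodule_of_ae_mem [FiniteDimensional ℝ E]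
    {V : Submodule ℝ E} (hX : Integrable X μ) (hXV : ∀ᵐ ω ∂μ, X ω ∈ V) :
    ∃ Z : Ω → V, Integrable Z μ ∧ ∀ᵐ ω ∂μ, (Z ω : E) = X ω := by
  obtain ⟨P, hP⟩ := Submodule.ClosedComplemented.of_finiteDimensional V
  refine ⟨fun ω => P (X ω), P.integrable_comp hX, ?_⟩
  filter_upwards [hXV] with ω hω
  exact congrArg Subtype.val (hP ⟨X ω, hω⟩)

variable [IsProbabilityMeasure μ]

theorem exists_ae_sub_mem_of_affineSpan_ne_top [FiniteDimensional ℝ E]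
    (hD : affineSpan ℝ D ≠ ⊤) (hX : AEStronglyMeasurable X μ) (h : μ {ω | X ω ∈ D} = 1) :
    ∃ V : Submodule ℝ E, V ≠ ⊤ ∧ ∃ p, ∀ᵐ ω ∂μ, X ω - p ∈ V := by
  obtain ⟨p, hp⟩ := nonempty_of_measure_setOf_mem_eq_one h
  have hpD : p ∈ affineSpan ℝ D := subset_affineSpan ℝ D hp
  refine ⟨(affineSpan ℝ D).direction, ?_, p, ?_⟩
  · rwa [Ne, AffineSubspace.direction_eq_top_iff_of_nonempty ⟨p, hpD⟩]
  · refine ae_mem_of_measure_setOf_mem_eq_one (s := {x | x - p ∈ _})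
      (Submodule.closed_of_finiteDimensional _ |>.preimage (continuous_sub_right p)) ?_ hX h
    exact fun x hx => AffineSubspace.vsub_mem_direction (subset_affineSpan ℝ D hx) hpD

theorem ae_sub_integral_mem_ker_of_forall_le [CompleteSpace E] (f : StrongDual ℝ E)
    (hf : ∀ x ∈ D, f x ≤ f (∫ ω, X ω ∂μ)) (hX : Integrable X μ) (h : μ {ω | X ω ∈ D} = 1) :
    ∀ᵐ ω ∂μ, X ω - ∫ ω, X ω ∂μ ∈ LinearMap.ker (f : E →ₗ[ℝ] ℝ) := by
  have hle : ∀ᵐ ω ∂μ, f (X ω) ≤ f (∫ ω, X ω ∂μ) :=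
    ae_mem_of_measure_setOf_mem_eq_one (s := {x | f x ≤ f (∫ ω, X ω ∂μ)})
      (isClosed_le f.continuous continuous_const) hf hX.1 h
  have heq : (fun ω => f (X ω)) =ᵐ[μ] fun _ => f (∫ ω, X ω ∂μ) := by
    rw [← integral_eq_iff_of_ae_le (f.integrable_comp hX) (integrable_const _) hle]
    simp [f.integral_comp_comm hX]
  filter_upwards [heq] with ω hω
  simp [LinearMap.mem_ker, hω]

theorem Convex.integral_mem_of_ae_sub_mem [FiniteDimensional ℝ E] {V : Submodule ℝ E} {p : E}
    (hV : ∀ (C : Set V) (Z : Ω → V), Convex ℝ C → Integrable Z μ → μ {ω | Z ω ∈ C} = 1 →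
      ∫ ω, Z ω ∂μ ∈ C)
    (hD : Convex ℝ D) (hX : Integrable X μ) (h : μ {ω | X ω ∈ D} = 1)
    (hXV : ∀ᵐ ω ∂μ, X ω - p ∈ V) : ∫ ω, X ω ∂μ ∈ D := by
  have hXp : Integrable (fun ω => X ω - p) μ := hX.sub (integrable_const p)
  obtain ⟨Z, hZ, hZX⟩ := hXp.exists_lift_submodule_of_ae_mem hXV
  let C : Set V := {y | p + y ∈ D}
  have hC : Convex ℝ C := (hD.translate_preimage_right p).linear_preimage V.subtype
  have hZC : μ {ω | Z ω ∈ C} = 1 := by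
    refine le_antisymm prob_le_one
      (h ▸ (measure_inter_conull hZX).symm.le.trans (measure_mono ?_))
    rintro ω ⟨hω, hZω⟩
    show p + (Z ω : E) ∈ D
    rwa [hZω, add_sub_cancel]
  have hint : ((∫ ω, Z ω ∂μ : V) : E) = ∫ ω, X ω ∂μ - p := calc
    ((∫ ω, Z ω ∂μ : V) : E) = ∫ ω, (Z ω : E) ∂μ := (V.subtypeL.integral_comp_comm hZ).symm
    _ = ∫ ω, X ω - p ∂μ := integral_congr_ae hZX
    _ = ∫ ω, X ω ∂μ - p := by simp [integral_sub hX (integrable_const p)]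
  simpa [C, hint] using hV C Z hC hZ hZC

theorem Convex.integral_mem_of_measure_eq_one [FiniteDimensional ℝ E] (hD : Convex ℝ D)
    (hX : Integrable X μ) (h : μ {ω | X ω ∈ D} = 1) : ∫ ω, X ω ∂μ ∈ D := by
  induction hn : Module.finrank ℝ E using Nat.strong_induction_on generalizing E with
  | _ n ih =>
  by_contra hm
  obtain ⟨V, hV, p, hXV⟩ : ∃ V : Submodule ℝ E, V ≠ ⊤ ∧ ∃ p, ∀ᵐ ω ∂μ, X ω - p ∈ V := by
    by_cases hint : (interior D).Nonempty
    · obtain ⟨f, u, hf0, hfD, hfm⟩ := geometric_hahn_banach_of_nonempty_interior hD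
        (convex_singleton _) (Set.disjoint_singleton_right.2 fun h' => hm (interior_subset h'))
        hint (Set.singleton_nonempty _)
      refine ⟨LinearMap.ker (f : E →ₗ[ℝ] ℝ), LinearMap.ker_eq_top.not.2 (by exact_mod_cast hf0),
        ∫ ω, X ω ∂μ, ?_⟩
      exact ae_sub_integral_mem_ker_of_forall_le f (fun x hx => (hfD x hx).trans (hfm _ rfl)) hX h
    · exact exists_ae_sub_mem_of_affineSpan_ne_top
        (hD.interior_nonempty_iff_affineSpan_eq_top.not.1 hint) hX.1 h
  exact hm (hD.integral_mem_of_ae_sub_mem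
    (fun C Z hC hZ hZC => ih _ (hn ▸ Submodule.finrank_lt hV) hC hZ hZC rfl) hX h hXV)

end

theorem expectation_mem_of_convex {Ω : Type*} [MeasureSpace Ω]
    [IsProbabilityMeasure (ℙ : Measure Ω)] {n : ℕ}
    (D : Set (EuclideanSpace ℝ (Fin n))) (hDconv : Convex ℝ D)
    (X : Ω → EuclideanSpace ℝ (Fin n)) (hX : Integrable X)
    (h : ℙ {ω | X ω ∈ D} = 1) :
    (∫ ω, X ω) ∈ D :=
  hDconv.integral_mem_of_measure_eq_one hX h
end

section
/- Let Z be an integrable random vector and Y a positive integrable scalar random variable such that Z/Y and E[Z]/E[Y] both lie in a convex set D, and let g be a convex function on D. Then E[Y · g(Z/Y)] ≥ E[Y] · g(E[Z]/E[Y]). -/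
/-!
The perspective `(y, z) ↦ y * g (y⁻¹ • z)` of a convex function `g` is convex on the cone
`{y > 0, y⁻¹ • z ∈ D}`, so the random point `((Y, Z), Y * g (Y⁻¹ • Z))` lies almost surely in the
convex epigraph of the perspective, and the inequality says that its expectation lies there too.
As `g` need not be continuous, this epigraph need not be closed; but in finite dimension the
barycenter of a probability measure carried by any convex set lies in that set. Otherwise a
supporting hyperplane through the barycenter (or the affine span, when the set has empty interior)
confines the measure to a convex set of lower dimension, and one concludes by induction.
-/

open MeasureTheory ProbabilityTheory Set Module

section Barycenter

variable {Ω E : Type*} [MeasurableSpace Ω] {μ : Measure Ω} [IsProbabilityMeasure μ]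
  [NormedAddCommGroup E] [NormedSpace ℝ E] [FiniteDimensional ℝ E] {f : Ω → E} {s : Set E}

theorem exists_convex_subset_vectorSpan_ne_top (hs : Convex ℝ s) (hf : Integrable f μ)
    (hfs : ∀ᵐ ω ∂μ, f ω ∈ s) (hb : ∫ ω, f ω ∂μ ∉ s) :
    ∃ t ⊆ s, Convex ℝ t ∧ (∀ᵐ ω ∂μ, f ω ∈ t) ∧ vectorSpan ℝ t ≠ ⊤ := by
  obtain ⟨ω₀, hω₀⟩ := hfs.exists
  by_cases hint : (interior s).Nonempty
  swap
  · refine ⟨s, subset_rfl, hs, hfs, fun htop => hint ?_⟩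
    rwa [hs.interior_nonempty_iff_affineSpan_eq_top,
      AffineSubspace.affineSpan_eq_top_iff_vectorSpan_eq_top_of_nonempty ℝ E E ⟨_, hω₀⟩]
  set b := ∫ ω, f ω ∂μ
  obtain ⟨φ, hφ, hφs⟩ := geometric_hahn_banach_of_nonempty_interior_point hs
    (fun h => hb (interior_subset h)) hint
  have hface : ∀ᵐ ω ∂μ, φ (f ω) = φ b :=
    (integral_eq_iff_of_ae_le (φ.integrable_comp hf) (integrable_const (φ b))
      (hfs.mono fun ω h => hφs _ h)).1 (by simpa using φ.integral_comp_comm hf)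
  refine ⟨s ∩ {x | φ x = φ b}, inter_subset_left, hs.inter (convex_hyperplane φ.isLinear _),
    hfs.and hface, fun htop => hφ ?_⟩
  have hker : vectorSpan ℝ (s ∩ {x | φ x = φ b}) ≤ LinearMap.ker (φ : E →ₗ[ℝ] ℝ) := by
    refine Submodule.span_le.2 ?_
    rintro _ ⟨x, hx, y, hy, rfl⟩
    change φ (x - y) = 0
    rw [map_sub, hx.2, hy.2, sub_self]
  ext x
  simpa using hker (htop ▸ Submodule.mem_top : x ∈ vectorSpan ℝ (s ∩ {x | φ x = φ b}))

theorem Convex.integral_mem_of_integral_mem_direction {t : Set E} (ht : Convex ℝ t)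
    (hf : Integrable f μ) (hft : ∀ᵐ ω ∂μ, f ω ∈ t)
    (hdir : ∀ (g : Ω → vectorSpan ℝ t) (s' : Set (vectorSpan ℝ t)), Convex ℝ s' →
      Integrable g μ → (∀ᵐ ω ∂μ, g ω ∈ s') → ∫ ω, g ω ∂μ ∈ s') :
    ∫ ω, f ω ∂μ ∈ t := by
  obtain ⟨c, hc⟩ := hft.exists
  set W := vectorSpan ℝ t
  obtain ⟨π, hπ⟩ := Submodule.ClosedComplemented.of_finiteDimensional W
  set g : Ω → W := fun ω => π (f ω - f c)
  have hg : Integrable g μ := π.integrable_comp (hf.sub (integrable_const _))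
  have hgf : ∀ᵐ ω ∂μ, W.subtypeL (g ω) = f ω - f c := by
    filter_upwards [hft] with ω hω
    exact congrArg Subtype.val (hπ ⟨_, vsub_mem_vectorSpan ℝ hω hc⟩)
  have hgt : ∀ᵐ ω ∂μ, g ω ∈ (fun x => x + f c) ∘ W.subtype ⁻¹' t := by
    filter_upwards [hft, hgf] with ω hω hω'
    simpa [← W.subtypeL_apply, hω'] using hω
  have hmem := hdir g _ ((ht.translate_preimage_left _).linear_preimage _) hg hgt
  have hint : ((∫ ω, g ω ∂μ : W) : E) = ∫ ω, f ω ∂μ - f c := by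
    rw [← W.subtypeL_apply, ← W.subtypeL.integral_comp_comm hg, integral_congr_ae hgf,
      integral_sub hf (integrable_const _), integral_const, probReal_univ, one_smul]
  simpa [hint] using hmem

theorem Convex.integral_mem_of_finiteDimensional (hs : Convex ℝ s) (hf : Integrable f μ)
    (hfs : ∀ᵐ ω ∂μ, f ω ∈ s) : ∫ ω, f ω ∂μ ∈ s := by
  induction hn : finrank ℝ E using Nat.strong_induction_on generalizing E with
  | _ n ih =>
    by_contra hb
    obtain ⟨t, hts, ht, hft, hspan⟩ := exists_convex_subset_vectorSpan_ne_top hs hf hfs hb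
    refine hb (hts (ht.integral_mem_of_integral_mem_direction hf hft
      fun g s' hs' hg hgs' => ih _ ?_ hs' hg hgs' rfl))
    exact hn ▸ Submodule.finrank_lt hspan

end Barycenter

section Perspective

variable {E : Type*} [AddCommGroup E] [Module ℝ E] {D : Set E} {g : E → ℝ}

theorem ConvexOn.perspective_combination (hg : ConvexOn ℝ D g) {y₁ y₂ a b : ℝ} {z₁ z₂ : E}
    (hy₁ : 0 < y₁) (hz₁ : y₁⁻¹ • z₁ ∈ D) (hy₂ : 0 < y₂) (hz₂ : y₂⁻¹ • z₂ ∈ D)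
    (ha : 0 ≤ a) (hb : 0 ≤ b) (hab : a + b = 1) :
    0 < a * y₁ + b * y₂ ∧ (a * y₁ + b * y₂)⁻¹ • (a • z₁ + b • z₂) ∈ D ∧
      (a * y₁ + b * y₂) * g ((a * y₁ + b * y₂)⁻¹ • (a • z₁ + b • z₂)) ≤
        a * (y₁ * g (y₁⁻¹ • z₁)) + b * (y₂ * g (y₂⁻¹ • z₂)) := by
  have hy : 0 < a * y₁ + b * y₂ := by
    rcases ha.eq_or_lt with rfl | ha
    · simp_all
    · positivity
  set y := a * y₁ + b * y₂
  have hwa : 0 ≤ a * y₁ / y := by positivity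
  have hwb : 0 ≤ b * y₂ / y := by positivity
  have hw : a * y₁ / y + b * y₂ / y = 1 := by rw [← add_div]; exact div_self hy.ne'
  -- `y⁻¹ • z` is the convex combination of the `yᵢ⁻¹ • zᵢ` with weights proportional to `a yᵢ`
  have hcomb : y⁻¹ • (a • z₁ + b • z₂) =
      (a * y₁ / y) • (y₁⁻¹ • z₁) + (b * y₂ / y) • (y₂⁻¹ • z₂) := by
    match_scalars <;> field_simp
  rw [hcomb]
  refine ⟨hy, hg.1 hz₁ hz₂ hwa hwb hw, ?_⟩
  calc y * g ((a * y₁ / y) • (y₁⁻¹ • z₁) + (b * y₂ / y) • (y₂⁻¹ • z₂))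
      ≤ y * ((a * y₁ / y) • g (y₁⁻¹ • z₁) + (b * y₂ / y) • g (y₂⁻¹ • z₂)) :=
        mul_le_mul_of_nonneg_left (hg.2 hz₁ hz₂ hwa hwb hw) hy.le
    _ = a * (y₁ * g (y₁⁻¹ • z₁)) + b * (y₂ * g (y₂⁻¹ • z₂)) := by
        simp only [smul_eq_mul]
        field_simp

theorem ConvexOn.perspective (hg : ConvexOn ℝ D g) :
    ConvexOn ℝ {p : ℝ × E | 0 < p.1 ∧ p.1⁻¹ • p.2 ∈ D} (fun p => p.1 * g (p.1⁻¹ • p.2)) := by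
  refine ⟨?_, ?_⟩ <;> rintro ⟨y₁, z₁⟩ ⟨hy₁, hz₁⟩ ⟨y₂, z₂⟩ ⟨hy₂, hz₂⟩ a b ha hb hab <;>
    obtain ⟨hy, hz, hle⟩ := hg.perspective_combination hy₁ hz₁ hy₂ hz₂ ha hb hab
  exacts [⟨hy, hz⟩, hle]

end Perspective

theorem generalized_jensen_pos_general {Ω : Type*} [MeasureSpace Ω]
    [IsProbabilityMeasure (ℙ : Measure Ω)] {d : ℕ}
    {D : Set (Fin d → ℝ)}
    (g : (Fin d → ℝ) → ℝ) (hg : ConvexOn ℝ D g)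
    (Y : Ω → ℝ) (Z : Ω → Fin d → ℝ)
    (hY : Integrable Y) (hZ : Integrable Z)
    (hYpos : ∀ᵐ ω, 0 < Y ω)
    (hmem : ∀ᵐ ω, (Y ω)⁻¹ • Z ω ∈ D)
    (hint : Integrable (fun ω => Y ω * g ((Y ω)⁻¹ • Z ω))) :
    (∫ ω, Y ω) * g ((∫ ω, Y ω)⁻¹ • (∫ ω, Z ω)) ≤
      ∫ ω, Y ω * g ((Y ω)⁻¹ • Z ω) := by
  have hbary := hg.perspective.convex_epigraph.integral_mem_of_finiteDimensional
    ((hY.prodMk hZ).prodMk hint)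
    (by filter_upwards [hYpos, hmem] with ω hy hz using ⟨⟨hy, hz⟩, le_rfl⟩)
  rw [integral_pair (hY.prodMk hZ) hint, integral_pair hY hZ] at hbary
  exact hbary.2

theorem generalized_jensen_pos {Ω : Type*} [MeasureSpace Ω]
    [IsProbabilityMeasure (ℙ : Measure Ω)] {d : ℕ}
    {D : Set (Fin d → ℝ)} (hD : Convex ℝ D)
    (g : (Fin d → ℝ) → ℝ) (hg : ConvexOn ℝ D g)
    (Y : Ω → ℝ) (Z : Ω → Fin d → ℝ)
    (hY : Integrable Y) (hZ : Integrable Z)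
    (hYpos : ∀ᵐ ω, 0 < Y ω)
    (hmem : ∀ᵐ ω, (Y ω)⁻¹ • Z ω ∈ D)
    (hmem' : (∫ ω, Y ω)⁻¹ • (∫ ω, Z ω) ∈ D)
    (hint : Integrable (fun ω => Y ω * g ((Y ω)⁻¹ • Z ω))) :
    (∫ ω, Y ω) * g ((∫ ω, Y ω)⁻¹ • (∫ ω, Z ω)) ≤
      ∫ ω, Y ω * g ((Y ω)⁻¹ • Z ω) :=
  generalized_jensen_pos_general g hg Y Z hY hZ hYpos hmem hint
end

section
/- Let Z be an integrable random vector and Y a negative integrable scalar random variable such that Z/Y and E[Z]/E[Y] both lie in a convex set D, and let g be a convex function on D. Then E[Y · g(Z/Y)] ≤ E[Y] · g(E[Z]/E[Y]). -/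
/-!
Jensen's inequality holds for every convex `g` on an arbitrary convex `D` in finite dimension,
without continuity or closedness, by induction on the dimension. If the mean `b` of `f` lies in
the interior of `D`, a subgradient of `g` at `b` is an affine minorant of `g` on `D` whose
integral is `g b`. Otherwise a supporting functional `ℓ` at `b` satisfies `ℓ ∘ f ≤ ℓ b` with equal
means, so `f` lies a.e. in the hyperplane `b + ker ℓ`, of smaller dimension.

For `Y > 0`, the perspective inequality `E[Y] g(E[Z] / E[Y]) ≤ E[Y g(Z / Y)]` is Jensen for `Z / Y`
under the probability measure with density `Y / E[Y]`; the case `Y < 0` is this one applied to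
`(-Y, -Z)`.
-/

open MeasureTheory ProbabilityTheory Set

section FiniteDimensional

variable {E : Type*} [NormedAddCommGroup E] [NormedSpace ℝ E] [FiniteDimensional ℝ E]
  {s : Set E} {g : E → ℝ} {b : E}

theorem ConvexOn.exists_subgradient_of_mem_interior (hg : ConvexOn ℝ s g) (hb : b ∈ interior s) :
    ∃ ℓ : StrongDual ℝ E, ∀ x ∈ s, g b + ℓ (x - b) ≤ g x := by
  -- Separate `(b, g b)` from the open strict epigraph of `g` over `interior s`; the separating
  -- functional is not vertical because `(b, g b + 1)` lies in that set.
  set U : Set (E × ℝ) := {p | p.1 ∈ interior s ∧ g p.1 < p.2}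
  have hU_convex : Convex ℝ U :=
    (hg.subset interior_subset hg.1.interior).convex_strict_epigraph
  have hU_open : IsOpen U := by
    have hcont : ContinuousOn (fun p : E × ℝ => p.2 - g p.1) (interior s ×ˢ univ) :=
      continuousOn_snd.sub (hg.continuousOn_interior.comp continuousOn_fst fun p hp => hp.1)
    convert hcont.isOpen_inter_preimage (isOpen_interior.prod isOpen_univ) isOpen_Ioi
      (t := Ioi 0) using 1
    ext p
    simp [U]
  obtain ⟨φ, hφ⟩ := geometric_hahn_banach_open_point hU_convex hU_open (x := (b, g b))
    fun h => h.2.false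
  set c := φ (0, 1)
  have hφ_apply : ∀ x t, φ (x, t) = φ (x, 0) + t * c := fun x t => by
    rw [← smul_eq_mul, ← map_smul, ← map_add, Prod.smul_mk, smul_zero, smul_eq_mul, mul_one,
      Prod.mk_add_mk, add_zero, zero_add]
  have hc : c < 0 := by
    have := hφ (b, g b + 1) ⟨hb, lt_add_one _⟩
    rw [hφ_apply, hφ_apply b (g b)] at this
    linarith
  let ℓ : StrongDual ℝ E := (-c)⁻¹ • φ.comp (ContinuousLinearMap.inl ℝ E ℝ)
  have hℓ : ∀ x, ℓ (x - b) = (φ (x, 0) - φ (b, 0)) / -c := fun x => by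
    simp only [ℓ, smul_apply, ContinuousLinearMap.comp_apply,
      ContinuousLinearMap.inl_apply, smul_eq_mul, div_eq_inv_mul]
    rw [← map_sub, Prod.mk_sub_mk, sub_zero]
  have h_interior : ∀ x ∈ interior s, g b + ℓ (x - b) ≤ g x := by
    intro x hx
    refine le_of_forall_gt_imp_ge_of_dense fun t ht => ?_
    have := hφ (x, t) ⟨hx, ht⟩
    rw [hφ_apply, hφ_apply b (g b)] at this
    rw [hℓ, ← le_sub_iff_add_le', div_le_iff₀ (neg_pos.2 hc)]
    linarith
  refine ⟨ℓ, fun x hx => ?_⟩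
  have hm := h_interior _ (hg.1.combo_interior_self_mem_interior hb hx
    (by norm_num : (0 : ℝ) < 1 / 2) (by norm_num : (0 : ℝ) ≤ 1 / 2) (by norm_num))
  have hgm := hg.2 (interior_subset hb) hx (by norm_num : (0 : ℝ) ≤ 1 / 2)
    (by norm_num : (0 : ℝ) ≤ 1 / 2) (by norm_num)
  have : (1 / 2 : ℝ) • b + (1 / 2 : ℝ) • x - b = (1 / 2 : ℝ) • (x - b) := by module
  rw [this, map_smul, smul_eq_mul] at hm
  simp only [smul_eq_mul] at hgm
  linarith

theorem Convex.exists_ne_zero_le_of_notMem_interior (hs : Convex ℝ s) (hbs : b ∈ s)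
    (hb : b ∉ interior s) : ∃ ℓ : StrongDual ℝ E, ℓ ≠ 0 ∧ ∀ x ∈ s, ℓ x ≤ ℓ b := by
  rcases (interior s).eq_empty_or_nonempty with hempty | hne
  · have hspan : vectorSpan ℝ s < ⊤ := by
      refine lt_top_iff_ne_top.2 fun htop => ?_
      rw [← direction_affineSpan, AffineSubspace.direction_eq_top_iff_of_nonempty
        ⟨b, mem_affineSpan ℝ hbs⟩, ← hs.interior_nonempty_iff_affineSpan_eq_top] at htop
      exact htop.ne_empty hempty
    obtain ⟨ℓ, hℓ, hker⟩ := (vectorSpan ℝ s).exists_le_ker_of_lt_top hspan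
    refine ⟨LinearMap.toContinuousLinearMap ℓ, by simpa using hℓ, fun x hx => ?_⟩
    have hx' : ℓ (x - b) = 0 := hker (vsub_mem_vectorSpan ℝ hx hbs)
    simp [sub_eq_zero.1 (map_sub ℓ x b ▸ hx')]
  · exact geometric_hahn_banach_of_nonempty_interior_point hs hb hne

variable {Ω : Type*} [MeasurableSpace Ω] {μ : Measure Ω} [IsProbabilityMeasure μ] {f : Ω → E}

theorem ConvexOn.map_integral_le_of_integral_mem_interior (hg : ConvexOn ℝ s g)
    (hfs : ∀ᵐ ω ∂μ, f ω ∈ s) (hfi : Integrable f μ) (hgi : Integrable (g ∘ f) μ)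
    (hb : ∫ ω, f ω ∂μ ∈ interior s) : g (∫ ω, f ω ∂μ) ≤ ∫ ω, g (f ω) ∂μ := by
  obtain ⟨ℓ, hℓ⟩ := hg.exists_subgradient_of_mem_interior hb
  have hfi' : Integrable (fun ω => f ω - ∫ ω, f ω ∂μ) μ := hfi.sub (integrable_const _)
  calc g (∫ ω, f ω ∂μ) = ∫ ω, (g (∫ ω, f ω ∂μ) + ℓ (f ω - ∫ ω, f ω ∂μ)) ∂μ := by
        rw [integral_add (integrable_const _) (ℓ.integrable_comp hfi'), ℓ.integral_comp_comm hfi',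
          integral_sub hfi (integrable_const _)]
        simp
    _ ≤ ∫ ω, g (f ω) ∂μ :=
        integral_mono_ae ((integrable_const _).add (ℓ.integrable_comp hfi')) hgi
          (hfs.mono fun ω hω => hℓ _ hω)

theorem ConvexOn.map_integral_le_of_ae_sub_integral_mem (W : Submodule ℝ E)
    (hW : ∀ (t : Set W) (h : W → ℝ) (F : Ω → W), ConvexOn ℝ t h → (∀ᵐ ω ∂μ, F ω ∈ t) →
      Integrable F μ → Integrable (h ∘ F) μ → ∫ ω, F ω ∂μ ∈ t →
      h (∫ ω, F ω ∂μ) ≤ ∫ ω, h (F ω) ∂μ)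
    (hg : ConvexOn ℝ s g) (hfs : ∀ᵐ ω ∂μ, f ω ∈ s) (hfi : Integrable f μ)
    (hgi : Integrable (g ∘ f) μ) (hb : ∫ ω, f ω ∂μ ∈ s)
    (hfW : ∀ᵐ ω ∂μ, f ω - ∫ ω, f ω ∂μ ∈ W) : g (∫ ω, f ω ∂μ) ≤ ∫ ω, g (f ω) ∂μ := by
  set b := ∫ ω, f ω ∂μ
  let A : W →ᵃ[ℝ] E := W.subtype.toAffineMap + AffineMap.const ℝ W b
  obtain ⟨q, hq⟩ := W.exists_isCompl
  let P : E →L[ℝ] W := (W.projectionOnto q hq).toContinuousLinearMap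
  let F : Ω → W := fun ω => P (f ω - b)
  have hAF : ∀ᵐ ω ∂μ, A (F ω) = f ω := hfW.mono fun ω hω => by
    have : F ω = ⟨f ω - b, hω⟩ := Submodule.projectionOnto_apply_left hq ⟨_, hω⟩
    simp [A, this]
  have hfi' : Integrable (fun ω => f ω - b) μ := hfi.sub (integrable_const b)
  have hFi : Integrable F μ := P.integrable_comp hfi'
  have hF_integral : ∫ ω, F ω ∂μ = 0 := by
    change ∫ ω, P (f ω - b) ∂μ = 0
    rw [P.integral_comp_comm hfi', integral_sub hfi (integrable_const b)]
    simp [b]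
  have hA0 : A 0 = b := by simp [A]
  have hgAF : (g ∘ A) ∘ F =ᵐ[μ] g ∘ f := hAF.mono fun ω hω => congrArg g hω
  calc g b = (g ∘ A) (∫ ω, F ω ∂μ) := by rw [hF_integral, Function.comp_apply, hA0]
    _ ≤ ∫ ω, (g ∘ A) (F ω) ∂μ :=
        hW (A ⁻¹' s) (g ∘ A) F (hg.comp_affineMap A)
          (by filter_upwards [hAF, hfs] with ω h₁ h₂; simpa [h₁] using h₂) hFi
          ((integrable_congr hgAF).2 hgi) (by simpa [hF_integral, hA0] using hb)
    _ = ∫ ω, g (f ω) ∂μ := integral_congr_ae hgAF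

theorem ConvexOn.map_integral_le_of_finiteDimensional (hg : ConvexOn ℝ s g)
    (hfs : ∀ᵐ ω ∂μ, f ω ∈ s) (hfi : Integrable f μ) (hgi : Integrable (g ∘ f) μ)
    (hb : ∫ ω, f ω ∂μ ∈ s) : g (∫ ω, f ω ∂μ) ≤ ∫ ω, g (f ω) ∂μ := by
  induction h : Module.finrank ℝ E using Nat.strong_induction_on generalizing E with
  | _ n ih =>
  by_cases hbi : ∫ ω, f ω ∂μ ∈ interior s
  · exact hg.map_integral_le_of_integral_mem_interior hfs hfi hgi hbi
  obtain ⟨ℓ, hℓ, hℓs⟩ := hg.1.exists_ne_zero_le_of_notMem_interior hb hbi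
  have hℓf : (fun ω => ℓ (f ω)) =ᵐ[μ] fun _ => ℓ (∫ ω, f ω ∂μ) :=
    (integral_eq_iff_of_ae_le (ℓ.integrable_comp hfi) (integrable_const _)
      (hfs.mono fun ω hω => hℓs _ hω)).1 (by simp [ℓ.integral_comp_comm hfi])
  set W := LinearMap.ker (ℓ : E →ₗ[ℝ] ℝ)
  have hW : Module.finrank ℝ W < n := by
    refine h ▸ Submodule.finrank_lt fun htop => hℓ (ContinuousLinearMap.ext fun x => ?_)
    exact LinearMap.mem_ker.1 (Submodule.eq_top_iff'.1 htop x)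
  refine hg.map_integral_le_of_ae_sub_integral_mem W
    (fun _ _ _ hg hfs hfi hgi hb => ih _ hW hg hfs hfi hgi hb rfl)
    hfs hfi hgi hb ?_
  filter_upwards [hℓf] with ω hω
  simpa [W, sub_eq_zero] using hω

end FiniteDimensional

section ChangeOfMeasure

variable {Ω : Type*} [MeasurableSpace Ω] {μ : Measure Ω}
  {F : Type*} [NormedAddCommGroup F] [NormedSpace ℝ F] {ρ : Ω → ℝ}

theorem integral_pos_of_ae_pos [NeZero μ] {f : Ω → ℝ} (hfi : Integrable f μ)
    (hf : ∀ᵐ ω ∂μ, 0 < f ω) : 0 < ∫ ω, f ω ∂μ := by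
  have hsupp : Function.support f =ᵐ[μ] univ :=
    ae_eq_univ.2 (ae_iff.1 (hf.mono fun _ h => h.ne'))
  rw [integral_pos_iff_support_of_nonneg_ae (hf.mono fun _ h => h.le) hfi, measure_congr hsupp]
  simp [NeZero.ne]

theorem integral_withDensity_ofReal_eq_integral_smul (hρm : AEMeasurable ρ μ) (hρ : 0 ≤ᵐ[μ] ρ)
    (h : Ω → F) :
    ∫ ω, h ω ∂μ.withDensity (fun ω => ENNReal.ofReal (ρ ω)) = ∫ ω, ρ ω • h ω ∂μ := by
  rw [integral_withDensity_eq_integral_toReal_smul₀ hρm.ennreal_ofReal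
    (ae_of_all _ fun _ => ENNReal.ofReal_lt_top)]
  exact integral_congr_ae (hρ.mono fun ω hω => by simp [ENNReal.toReal_ofReal hω])

theorem integrable_withDensity_ofReal_iff (hρm : AEMeasurable ρ μ) (hρ : 0 ≤ᵐ[μ] ρ)
    {h : Ω → F} :
    Integrable h (μ.withDensity fun ω => ENNReal.ofReal (ρ ω)) ↔
      Integrable (fun ω => ρ ω • h ω) μ := by
  rw [integrable_withDensity_iff_integrable_smul₀' hρm.ennreal_ofReal
    (ae_of_all _ fun _ => ENNReal.ofReal_lt_top)]
  exact integrable_congr (hρ.mono fun ω hω => by simp [ENNReal.toReal_ofReal hω])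

end ChangeOfMeasure

theorem ConvexOn.perspective_integral_le_integral_perspective {E : Type*} [NormedAddCommGroup E]
    [NormedSpace ℝ E] [FiniteDimensional ℝ E] {s : Set E} {g : E → ℝ} {Ω : Type*}
    [MeasurableSpace Ω] {μ : Measure Ω} [NeZero μ] (hg : ConvexOn ℝ s g) {Y : Ω → ℝ}
    {Z : Ω → E} (hY : Integrable Y μ) (hZ : Integrable Z μ) (hY_pos : ∀ᵐ ω ∂μ, 0 < Y ω)
    (hs : ∀ᵐ ω ∂μ, (Y ω)⁻¹ • Z ω ∈ s) (hs' : (∫ ω, Y ω ∂μ)⁻¹ • ∫ ω, Z ω ∂μ ∈ s)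
    (hgi : Integrable (fun ω => Y ω * g ((Y ω)⁻¹ • Z ω)) μ) :
    (∫ ω, Y ω ∂μ) * g ((∫ ω, Y ω ∂μ)⁻¹ • ∫ ω, Z ω ∂μ) ≤ ∫ ω, Y ω * g ((Y ω)⁻¹ • Z ω) ∂μ := by
  set c := ∫ ω, Y ω ∂μ
  have hc : 0 < c := integral_pos_of_ae_pos hY hY_pos
  have hρm : AEMeasurable (fun ω => Y ω / c) μ := (hY.div_const c).aemeasurable
  have hρ : 0 ≤ᵐ[μ] fun ω => Y ω / c := hY_pos.mono fun _ h => div_nonneg h.le hc.le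
  set ν := μ.withDensity fun ω => ENNReal.ofReal (Y ω / c)
  have : IsProbabilityMeasure ν := by
    constructor
    rw [withDensity_apply _ MeasurableSet.univ, Measure.restrict_univ,
      ← ofReal_integral_eq_lintegral_ofReal (hY.div_const c) hρ, integral_div, div_self hc.ne',
      ENNReal.ofReal_one]
  have hf : (fun ω => (Y ω / c) • (Y ω)⁻¹ • Z ω) =ᵐ[μ] fun ω => c⁻¹ • Z ω :=
    hY_pos.mono fun ω h => by simp only [smul_smul]; field_simp
  have hgf : (fun ω => (Y ω / c) • g ((Y ω)⁻¹ • Z ω)) =ᵐ[μ]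
      fun ω => c⁻¹ * (Y ω * g ((Y ω)⁻¹ • Z ω)) :=
    ae_of_all _ fun ω => by simp only [smul_eq_mul]; ring
  have hJ := hg.map_integral_le_of_finiteDimensional (μ := ν)
    (hs.filter_mono (withDensity_absolutelyContinuous μ _).ae_le)
    ((integrable_withDensity_ofReal_iff hρm hρ).2 ((integrable_congr hf).2 (hZ.smul c⁻¹)))
    ((integrable_withDensity_ofReal_iff hρm hρ).2 ((integrable_congr hgf).2 (hgi.const_mul c⁻¹)))
    (by rwa [integral_withDensity_ofReal_eq_integral_smul hρm hρ, integral_congr_ae hf,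
      integral_smul])
  rw [integral_withDensity_ofReal_eq_integral_smul hρm hρ, integral_congr_ae hf, integral_smul,
    integral_withDensity_ofReal_eq_integral_smul hρm hρ, integral_congr_ae hgf,
    integral_const_mul] at hJ
  calc c * g (c⁻¹ • ∫ ω, Z ω ∂μ) ≤ c * (c⁻¹ * ∫ ω, Y ω * g ((Y ω)⁻¹ • Z ω) ∂μ) :=
        mul_le_mul_of_nonneg_left hJ hc.le
    _ = ∫ ω, Y ω * g ((Y ω)⁻¹ • Z ω) ∂μ := mul_inv_cancel_left₀ hc.ne' _

theorem generalized_jensen_neg_general {Ω : Type*} [MeasureSpace Ω]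
    [IsProbabilityMeasure (ℙ : Measure Ω)] {d : ℕ}
    {D : Set (Fin d → ℝ)}
    (g : (Fin d → ℝ) → ℝ) (hg : ConvexOn ℝ D g)
    (Y : Ω → ℝ) (Z : Ω → Fin d → ℝ)
    (hY : Integrable Y) (hZ : Integrable Z)
    (hYneg : ∀ᵐ ω, Y ω < 0)
    (hmem : ∀ᵐ ω, (Y ω)⁻¹ • Z ω ∈ D)
    (hmem' : (∫ ω, Y ω)⁻¹ • (∫ ω, Z ω) ∈ D)
    (hint : Integrable (fun ω => Y ω * g ((Y ω)⁻¹ • Z ω))) :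
    ∫ ω, Y ω * g ((Y ω)⁻¹ • Z ω) ≤
      (∫ ω, Y ω) * g ((∫ ω, Y ω)⁻¹ • (∫ ω, Z ω)) := by
  have h := hg.perspective_integral_le_integral_perspective hY.neg hZ.neg
    (hYneg.mono fun _ h => neg_pos.2 h) (by simpa using hmem) (by simpa [integral_neg] using hmem')
    (by simpa using hint.neg)
  simp only [Pi.neg_apply, integral_neg, inv_neg, neg_smul_neg, neg_mul] at h
  linarith

theorem generalized_jensen_neg {Ω : Type*} [MeasureSpace Ω]
    [IsProbabilityMeasure (ℙ : Measure Ω)] {d : ℕ}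
    {D : Set (Fin d → ℝ)} (hD : Convex ℝ D)
    (g : (Fin d → ℝ) → ℝ) (hg : ConvexOn ℝ D g)
    (Y : Ω → ℝ) (Z : Ω → Fin d → ℝ)
    (hY : Integrable Y) (hZ : Integrable Z)
    (hYneg : ∀ᵐ ω, Y ω < 0)
    (hmem : ∀ᵐ ω, (Y ω)⁻¹ • Z ω ∈ D)
    (hmem' : (∫ ω, Y ω)⁻¹ • (∫ ω, Z ω) ∈ D)
    (hint : Integrable (fun ω => Y ω * g ((Y ω)⁻¹ • Z ω))) :
    ∫ ω, Y ω * g ((Y ω)⁻¹ • Z ω) ≤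
      (∫ ω, Y ω) * g ((∫ ω, Y ω)⁻¹ • (∫ ω, Z ω)) :=
  generalized_jensen_neg_general g hg Y Z hY hZ hYneg hmem hmem' hint
end

section
/- Let N = inf{n ∈ 𝒩 : (n, Sₙ) ∈ R} where Sₙ is the partial sum of i.i.d. random vectors with mean μ and R is a convex stopping region. Let A = {t ≥ 0 : (t, tμ) ∈ R}. If A is nonempty then E[N] ≥ inf A; if A is empty then E[N] = ∞. -/
/-!
Replace each stopping region `Gₙ = {s | n ∈ 𝒩 ∧ (n, s) ∈ R}` by a measurable hull for the law of
`Sₙ` and let `τ ≤ N` be the first time `Sₙ` enters these hulls; `{τ > i}` is determined by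
`X₀, …, Xᵢ₋₁`, hence independent of `Xᵢ`. If `E N < ∞` then `E τ < ∞`, and Wald's identity for the
increments `(1, Xᵢ)` gives `E (τ, S_τ) = (E τ, E τ • μ)`. The vector `(τ, S_τ)` lies in `R` up to
an inner-null set, and the barycenter of a probability measure on a finite-dimensional space that
charges no measurable set disjoint from a convex set `C` lies in `C`: otherwise a supporting
hyperplane at the barycenter (or the affine span of `C`, if `C` has empty interior) carries the
measure, and one concludes by induction on the dimension. So `t = E τ` satisfies `(t, t • μ) ∈ R`
and `t ≤ E N`.
-/

open MeasureTheory ProbabilityTheory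
open scoped ENNReal

open Set

namespace MeasureTheory.Measure

variable {E F : Type*} [MeasurableSpace E] [MeasurableSpace F] {ν : Measure E} {C M : Set E}

/-- The inner `ν`-measure of `Cᶜ` vanishes; for non-measurable `C` this is weaker than
`∀ᵐ x ∂ν, x ∈ C`. -/
def InnerConcentrated (ν : Measure E) (C : Set E) : Prop :=
  ∀ B, MeasurableSet B → Disjoint B C → ν B = 0

theorem InnerConcentrated.nonempty [NeZero ν] (h : ν.InnerConcentrated C) : C.Nonempty := by
  by_contra hC
  exact NeZero.ne (ν univ) (h univ MeasurableSet.univ (by simp_all [not_nonempty_iff_eq_empty]))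

theorem InnerConcentrated.ae_mem (h : ν.InnerConcentrated C) (hM : MeasurableSet M)
    (hCM : C ⊆ M) : ∀ᵐ x ∂ν, x ∈ M :=
  h Mᶜ hM.compl (disjoint_compl_left.mono_right hCM)

theorem InnerConcentrated.inter (h : ν.InnerConcentrated C) (hM : MeasurableSet M)
    (hae : ∀ᵐ x ∂ν, x ∈ M) : ν.InnerConcentrated (C ∩ M) := fun B hB hBCM ↦
  measure_mono_null (fun x hx ↦ (em (x ∈ M)).imp (⟨hx, ·⟩) id) <|
    measure_union_null (h (B ∩ M) (hB.inter hM) <| disjoint_left.2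
      fun _ hxBM hxC ↦ disjoint_left.1 hBCM hxBM.1 ⟨hxC, hxBM.2⟩) hae

theorem InnerConcentrated.map {g : E → F} (h : ν.InnerConcentrated C) (hg : Measurable g)
    {D : Set F} (hgCD : MapsTo g C D) : (ν.map g).InnerConcentrated D := fun B hB hBD ↦ by
  rw [map_apply hg hB]
  exact h _ (hg hB) (Disjoint.preimage g hBD |>.mono_right hgCD.subset_preimage)

end MeasureTheory.Measure

namespace Convex

variable {E : Type*} [NormedAddCommGroup E] [NormedSpace ℝ E] [FiniteDimensional ℝ E] {C : Set E}

theorem exists_sub_mem_of_interior_eq_empty (hC : Convex ℝ C) (hCne : C.Nonempty)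
    (hCi : interior C = ∅) : ∃ (p : E) (W : Submodule ℝ E), W ≠ ⊤ ∧ ∀ x ∈ C, x - p ∈ W := by
  obtain ⟨p, hp⟩ := hCne
  refine ⟨p, (affineSpan ℝ C).direction, fun htop ↦ ?_, fun x hx ↦
    AffineSubspace.vsub_mem_direction (subset_affineSpan ℝ C hx) (subset_affineSpan ℝ C hp)⟩
  rw [AffineSubspace.direction_eq_top_iff_of_nonempty ⟨p, subset_affineSpan ℝ C hp⟩,
    ← hC.interior_nonempty_iff_affineSpan_eq_top, hCi] at htop
  exact not_nonempty_empty htop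

variable [MeasurableSpace E] [BorelSpace E] {ν : Measure E} [IsProbabilityMeasure ν]

theorem exists_subset_hyperplane_of_integral_id_notMem (hC : Convex ℝ C)
    (hν : ν.InnerConcentrated C) (hint : Integrable id ν) (hCi : (interior C).Nonempty)
    (hb : ∫ x, x ∂ν ∉ C) :
    ∃ C' ⊆ C, Convex ℝ C' ∧ ν.InnerConcentrated C' ∧
      ∃ (p : E) (W : Submodule ℝ E), W ≠ ⊤ ∧ ∀ x ∈ C', x - p ∈ W := by
  set b := ∫ x, x ∂ν
  obtain ⟨f, hf⟩ := geometric_hahn_banach_open_point hC.interior isOpen_interior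
    (fun h ↦ hb (interior_subset h))
  have hfC : C ⊆ f ⁻¹' Iic (f b) := by
    refine subset_closure.trans ?_
    rw [← hC.closure_interior_eq_closure_of_nonempty_interior hCi]
    exact closure_minimal (fun x hx ↦ (hf x hx).le) (isClosed_Iic.preimage f.continuous)
  have hf_le : ∀ᵐ x ∂ν, f x ≤ f b :=
    hν.ae_mem (measurableSet_Iic.preimage f.continuous.measurable) hfC
  have hf_eq : ∀ᵐ x ∂ν, f x = f b := by
    refine (integral_eq_iff_of_ae_le (f.integrable_comp hint) (integrable_const (f b)) hf_le).1 ?_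
    rw [integral_const, probReal_univ, one_smul]
    exact f.integral_comp_comm hint
  have hνC' := hν.inter (measurableSet_singleton (f b) |>.preimage f.continuous.measurable) hf_eq
  obtain ⟨p, -, hpf⟩ := hνC'.nonempty
  refine ⟨C ∩ f ⁻¹' {f b}, inter_subset_left,
    hC.inter ((convex_singleton _).linear_preimage f.toLinearMap), hνC', p,
    LinearMap.ker f.toLinearMap, fun htop ↦ ?_, fun x hx ↦ ?_⟩
  · obtain ⟨x, hx⟩ := hCi
    refine (hf x hx).ne ?_
    simp [← ContinuousLinearMap.coe_coe, LinearMap.ker_eq_top.1 htop]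
  · simp_all [LinearMap.mem_ker]

theorem add_integral_map_proj_sub {W : Submodule ℝ E} (π : E →L[ℝ] W) (hπ : ∀ w : W, π w = w)
    {p : E} (hCW : ∀ x ∈ C, x - p ∈ W) (hC : Convex ℝ C) (hν : ν.InnerConcentrated C)
    (hint : Integrable id ν) :
    p + ↑(∫ w, w ∂(ν.map fun x ↦ π (x - p))) = ∫ x, x ∂ν := by
  have hb : ∫ x, x ∂ν ∈ closure C := hC.closure.integral_mem isClosed_closure
    (hν.ae_mem isClosed_closure.measurableSet subset_closure) hint
  have hbW : ∫ x, x ∂ν - p ∈ W :=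
    closure_minimal hCW (W.closed_of_finiteDimensional.preimage (continuous_sub_right p)) hb
  have hg : Continuous fun x ↦ π (x - p) := π.continuous.comp (continuous_sub_right p)
  rw [integral_map (f := fun w : W ↦ w) hg.measurable.aemeasurable aestronglyMeasurable_id,
    π.integral_comp_comm (φ := fun x ↦ x - p) (hint.sub (integrable_const p)),
    integral_sub (f := fun x ↦ x) hint (integrable_const p),
    integral_const, probReal_univ, one_smul, ← Subtype.coe_mk _ hbW, hπ]
  exact add_sub_cancel p _

end Convex

namespace MeasureTheory.Measure.InnerConcentrated

variable {E : Type*} [NormedAddCommGroup E] [NormedSpace ℝ E] [MeasurableSpace E] [BorelSpace E]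
  [FiniteDimensional ℝ E] {C : Set E}

theorem integral_id_mem {ν : Measure E} [IsProbabilityMeasure ν] (hν : ν.InnerConcentrated C)
    (hC : Convex ℝ C) (hint : Integrable id ν) : ∫ x, x ∂ν ∈ C := by
  induction hn : Module.finrank ℝ E using Nat.strong_induction_on generalizing E with
  | _ n ih =>
  by_contra hb
  obtain ⟨C', hC'C, hC', hνC', p, W, hW, hC'W⟩ : ∃ C' ⊆ C, Convex ℝ C' ∧ ν.InnerConcentrated C' ∧
      ∃ (p : E) (W : Submodule ℝ E), W ≠ ⊤ ∧ ∀ x ∈ C', x - p ∈ W := by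
    rcases (interior C).eq_empty_or_nonempty with hCi | hCi
    · obtain ⟨p, W, hW, hCW⟩ := hC.exists_sub_mem_of_interior_eq_empty hν.nonempty hCi
      exact ⟨C, subset_rfl, hC, hν, p, W, hW, hCW⟩
    · exact hC.exists_subset_hyperplane_of_integral_id_notMem hν hint hCi hb
  obtain ⟨π, hπ⟩ := Submodule.ClosedComplemented.of_finiteDimensional W
  have hg : Continuous fun x ↦ π (x - p) := π.continuous.comp (continuous_sub_right p)
  have hmaps : MapsTo (fun x ↦ π (x - p)) C' {w : W | p + w ∈ C'} := fun x hx ↦ by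
    simp [hπ ⟨x - p, hC'W x hx⟩, hx]
  have := Measure.isProbabilityMeasure_map (μ := ν) hg.aemeasurable
  have hmem := ih _ (hn ▸ Submodule.finrank_lt hW) (hνC'.map hg.measurable hmaps)
    ((hC'.translate_preimage_right p).linear_preimage W.subtype)
    ((integrable_map_measure aestronglyMeasurable_id hg.aemeasurable).2
      (π.integrable_comp (hint.sub (integrable_const p)))) rfl
  rw [mem_ofPred_eq, Convex.add_integral_map_proj_sub π hπ hC'W hC' hνC' hint] at hmem
  exact hb (hC'C hmem)

theorem integral_mem {Ω : Type*} {mΩ : MeasurableSpace Ω} {P : Measure Ω} [IsProbabilityMeasure P]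
    {Z : Ω → E} (h : (P.map Z).InnerConcentrated C) (hC : Convex ℝ C) (hZ : Integrable Z P) :
    ∫ ω, Z ω ∂P ∈ C := by
  have := Measure.isProbabilityMeasure_map (μ := P) hZ.aemeasurable
  have hmem := h.integral_id_mem hC
    ((integrable_map_measure aestronglyMeasurable_id hZ.aemeasurable).2 hZ)
  rwa [integral_map (f := fun x ↦ x) hZ.aemeasurable aestronglyMeasurable_id] at hmem

end MeasureTheory.Measure.InnerConcentrated

namespace MeasureTheory

variable {α G : Type*} [MeasurableSpace α] {μ : Measure α} [NormedAddCommGroup G] [CompleteSpace G]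

theorem integrable_tsum {f : ℕ → α → G} (hf : ∀ i, AEStronglyMeasurable (f i) μ)
    (hf' : ∑' i, ∫⁻ a, ‖f i a‖ₑ ∂μ ≠ ∞) : Integrable (fun a ↦ ∑' i, f i a) μ := by
  have hlint : ∫⁻ a, ∑' i, ‖f i a‖ₑ ∂μ ≠ ∞ := by
    rwa [lintegral_tsum fun i ↦ (hf i).enorm]
  have hsum : ∀ᵐ a ∂μ, Summable fun i ↦ f i a := by
    filter_upwards [ae_lt_top' (AEMeasurable.tsum fun i ↦ (hf i).enorm) hlint] with a ha
    exact Summable.of_nnnorm (ENNReal.tsum_coe_ne_top_iff_summable.1 ha.ne)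
  refine ⟨aestronglyMeasurable_of_tendsto_ae (f := fun n a ↦ ∑ i ∈ Finset.range n, f i a) _
    (fun n ↦ Finset.aestronglyMeasurable_fun_sum _ fun i _ ↦ hf i)
    (hsum.mono fun a ha ↦ ha.hasSum.tendsto_sum_nat), ?_⟩
  exact (lintegral_mono fun a ↦ enorm_tsum_le_tsum_enorm).trans_lt hlint.lt_top

end MeasureTheory

namespace ProbabilityTheory

theorem iIndepFun.indep_iSup_comap_Iio {Ω E : Type*} {mΩ : MeasurableSpace Ω} {P : Measure Ω}
    [mE : MeasurableSpace E] {X : ℕ → Ω → E} (hX : ∀ i, Measurable (X i)) (hindep : iIndepFun X P)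
    (i : ℕ) : Indep (⨆ j ∈ Iio i, .comap (X j) mE) (.comap (X i) mE) P := by
  simpa using indep_iSup_of_disjoint (fun j ↦ (hX j).comap_le)
    ((iIndepFun_iff_iIndep _ _ _).1 hindep) (S := Iio i) (T := {i}) (by simp)

variable {Ω F : Type*} {mΩ : MeasurableSpace Ω} {P : Measure Ω} [NormedAddCommGroup F]
  [MeasurableSpace F] [BorelSpace F] {m : ℕ → MeasurableSpace Ω} {A : ℕ → Set Ω} {Y : ℕ → Ω → F}

theorem lintegral_enorm_indicator_of_indep (hm : ∀ i, m i ≤ mΩ)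
    (hA : ∀ i, MeasurableSet[m i] (A i)) (hY : ∀ i, Measurable (Y i))
    (hindep : ∀ i, Indep (m i) (.comap (Y i) ‹_›) P) (hident : ∀ i, P.map (Y i) = P.map (Y 0))
    (i : ℕ) : ∫⁻ ω, ‖(A i).indicator (Y i) ω‖ₑ ∂P = P (A i) * ∫⁻ ω, ‖Y 0 ω‖ₑ ∂P := by
  have hAi : Measurable[m i] ((A i).indicator (1 : Ω → ℝ≥0∞)) := measurable_const.indicator (hA i)
  have hYi : Measurable[.comap (Y i) ‹_›] fun ω ↦ ‖Y i ω‖ₑ :=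
    measurable_enorm.comp (comap_measurable (Y i))
  calc ∫⁻ ω, ‖(A i).indicator (Y i) ω‖ₑ ∂P
      = ∫⁻ ω, (A i).indicator 1 ω * ‖Y i ω‖ₑ ∂P :=
        lintegral_congr fun ω ↦ by by_cases h : ω ∈ A i <;> simp [h]
    _ = P (A i) * ∫⁻ ω, ‖Y i ω‖ₑ ∂P := by
      rw [lintegral_mul_eq_lintegral_mul_lintegral_of_independent_measurableSpace (hm i)
        (hY i).comap_le (hindep i) hAi hYi, lintegral_indicator_one (hm i _ (hA i))]
    _ = P (A i) * ∫⁻ ω, ‖Y 0 ω‖ₑ ∂P := by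
      rw [← lintegral_map measurable_enorm (hY i), hident, lintegral_map measurable_enorm (hY 0)]

variable [IsProbabilityMeasure P] [NormedSpace ℝ F] [CompleteSpace F] [SecondCountableTopology F]

/-- Wald's identity: with `A i = {τ > i}` this is `E (∑_{i < τ} Yᵢ) = E τ • E Y₀`. -/
theorem integrable_tsum_indicator_and_integral_of_indep (hm : ∀ i, m i ≤ mΩ)
    (hA : ∀ i, MeasurableSet[m i] (A i)) (hY : ∀ i, Measurable (Y i))
    (hindep : ∀ i, Indep (m i) (.comap (Y i) ‹_›) P) (hident : ∀ i, P.map (Y i) = P.map (Y 0))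
    (hint : Integrable (Y 0) P) (hsum : ∑' i, P (A i) ≠ ∞) :
    Integrable (fun ω ↦ ∑' i, (A i).indicator (Y i) ω) P ∧
      ∫ ω, ∑' i, (A i).indicator (Y i) ω ∂P = (∑' i, P (A i)).toReal • ∫ ω, Y 0 ω ∂P := by
  have hmeas i : AEStronglyMeasurable ((A i).indicator (Y i)) P :=
    ((hY i).indicator (hm i _ (hA i))).aestronglyMeasurable
  have hfin : ∑' i, ∫⁻ ω, ‖(A i).indicator (Y i) ω‖ₑ ∂P ≠ ∞ := by
    simp_rw [lintegral_enorm_indicator_of_indep hm hA hY hindep hident, ENNReal.tsum_mul_right]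
    exact ENNReal.mul_ne_top hsum hint.hasFiniteIntegral.ne
  have hterm i : ∫ ω, (A i).indicator (Y i) ω ∂P = P.real (A i) • ∫ ω, Y 0 ω ∂P := by
    have hident' : IdentDistrib (Y i) (Y 0) P P :=
      ⟨(hY i).aemeasurable, (hY 0).aemeasurable, hident i⟩
    rw [integral_indicator (hm i _ (hA i)), ← hident'.integral_eq]
    exact (hindep i).setIntegral_eq_smul (f := id) (hm i) (hY i).aemeasurable (hA i)
      aestronglyMeasurable_id
  refine ⟨integrable_tsum hmeas hfin, ?_⟩
  simp_rw [integral_tsum hmeas hfin, hterm, measureReal_def]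
  rw [(ENNReal.summable_toReal hsum).tsum_smul_const,
    ENNReal.tsum_toReal_eq fun i ↦ measure_ne_top P (A i)]

end ProbabilityTheory

section StoppingRegion

variable {Ω E : Type*} [MeasureSpace Ω] [AddCommMonoid E] [MeasurableSpace E]
  (X : ℕ → Ω → E) (G : ℕ → Set E)

/-- `G n` need not be measurable; replacing it by a measurable hull for the law of
`Sₙ = X 0 + ⋯ + X (n - 1)` only adds a set that contains no measurable set of positive mass. -/
def stoppingHull (n : ℕ) : Set E :=
  toMeasurable (Measure.map (fun ω ↦ ∑ i ∈ Finset.range n, X i ω) ℙ) (G n)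

/-- The event `{τ > i}`, where `τ` is the first `n` with `Sₙ ∈ stoppingHull X G n`. -/
def notStoppedBy (i : ℕ) : Set Ω :=
  {ω | ∀ n ≤ i, ∑ j ∈ Finset.range n, X j ω ∉ stoppingHull X G n}

/-- `(τ, S_τ)` written as `∑ᵢ 1{τ > i} • (1, Xᵢ)`; on `{τ = ∞}` this is junk, but that event is
null as soon as `E τ < ∞`. -/
noncomputable def stoppedTimeAndSum [TopologicalSpace E] (ω : Ω) : ℝ × E :=
  ∑' i, (notStoppedBy X G i).indicator (fun ω ↦ ((1 : ℝ), X i ω)) ω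

variable {X G}

theorem measurableSet_notStoppedBy [MeasurableAdd₂ E] (i : ℕ) :
    MeasurableSet[⨆ j ∈ Iio i, .comap (X j) ‹_›] (notStoppedBy X G i) := by
  let mPast : MeasurableSpace Ω := ⨆ j ∈ Iio i, .comap (X j) ‹_›
  have hX j (hj : j < i) : Measurable[mPast] (X j) :=
    (comap_measurable (X j)).mono (le_iSup₂_of_le (f := fun j (_ : j ∈ Iio i) ↦ _) j hj le_rfl)
      le_rfl
  have hS n (hn : n ≤ i) : Measurable[mPast] fun ω ↦ ∑ j ∈ Finset.range n, X j ω :=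
    Finset.measurable_fun_sum _ fun j hj ↦ hX j ((Finset.mem_range.1 hj).trans_le hn)
  simp only [notStoppedBy, ofPred_forall]
  exact MeasurableSet.iInter fun n ↦ MeasurableSet.iInter fun hn ↦
    (measurableSet_toMeasurable _ _).compl.preimage (hS n hn)

theorem tsum_indicator_notStoppedBy_le {ω : Ω} {n : ℕ}
    (hn : ∑ j ∈ Finset.range n, X j ω ∈ G n) :
    ∑' i, (notStoppedBy X G i).indicator 1 ω ≤ (n : ℝ≥0∞) := by
  have hstop i (hi : n ≤ i) : ω ∉ notStoppedBy X G i := fun hω ↦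
    hω n hi (subset_toMeasurable _ _ hn)
  rw [tsum_eq_sum (s := Finset.range n) fun i hi ↦
    indicator_of_notMem (hstop i (not_lt.1 (Finset.mem_range.not.1 hi))) _]
  calc ∑ i ∈ Finset.range n, (notStoppedBy X G i).indicator 1 ω
      ≤ ∑ _i ∈ Finset.range n, (1 : ℝ≥0∞) :=
        Finset.sum_le_sum fun i _ ↦ indicator_le_self' (fun _ _ ↦ zero_le_one) ω
    _ = n := by simp

theorem stoppedTimeAndSum_eq [TopologicalSpace E] {ω : Ω} {n : ℕ}
    (hn : ∑ j ∈ Finset.range n, X j ω ∈ stoppingHull X G n)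
    (hlt : ∀ m < n, ∑ j ∈ Finset.range m, X j ω ∉ stoppingHull X G m) :
    stoppedTimeAndSum X G ω = ((n : ℝ), ∑ j ∈ Finset.range n, X j ω) := by
  have hmem i : ω ∈ notStoppedBy X G i ↔ i < n :=
    ⟨fun hω ↦ not_le.1 fun hni ↦ hω n hni hn, fun hi m hm ↦ hlt m (hm.trans_lt hi)⟩
  rw [stoppedTimeAndSum, tsum_eq_sum (s := Finset.range n) fun i hi ↦
    indicator_of_notMem ((hmem i).not.2 (Finset.mem_range.not.1 hi)) _,
    Finset.sum_congr rfl fun i hi ↦ indicator_of_mem ((hmem i).2 (Finset.mem_range.1 hi)) _]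
  exact Prod.ext (by simp [Prod.fst_sum]) (by simp [Prod.snd_sum])

variable [MeasurableAdd₂ E]

theorem tsum_measure_notStoppedBy_le_lintegral (hX : ∀ i, Measurable (X i)) :
    ∑' i, ℙ (notStoppedBy X G i) ≤
      ∫⁻ ω, ⨅ (n : ℕ) (_ : ∑ j ∈ Finset.range n, X j ω ∈ G n), (n : ℝ≥0∞) := by
  have hA i : MeasurableSet (notStoppedBy X G i) :=
    iSup₂_le (fun j _ ↦ (hX j).comap_le) _ (measurableSet_notStoppedBy i)
  calc ∑' i, ℙ (notStoppedBy X G i)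
      = ∫⁻ ω, ∑' i, (notStoppedBy X G i).indicator 1 ω := by
        rw [lintegral_tsum fun i ↦ (measurable_one.indicator (hA i)).aemeasurable]
        exact tsum_congr fun i ↦ (lintegral_indicator_one (hA i)).symm
    _ ≤ ∫⁻ ω, ⨅ (n : ℕ) (_ : ∑ j ∈ Finset.range n, X j ω ∈ G n), (n : ℝ≥0∞) :=
        lintegral_mono fun _ ↦ le_iInf₂ fun _ ↦ tsum_indicator_notStoppedBy_le

theorem innerConcentrated_map_stoppedTimeAndSum [IsFiniteMeasure (ℙ : Measure Ω)]
    [TopologicalSpace E] (hX : ∀ i, Measurable (X i)) {R : Set (ℝ × E)}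
    (hGR : ∀ n, ∀ s ∈ G n, ((n : ℝ), s) ∈ R) (hsum : ∑' i, ℙ (notStoppedBy X G i) ≠ ∞)
    (hZ : AEMeasurable (stoppedTimeAndSum X G) ℙ) :
    (Measure.map (stoppedTimeAndSum X G) ℙ).InnerConcentrated R := by
  classical
  intro B hB hBR
  rw [Measure.map_apply_of_aemeasurable hZ hB]
  set S : ℕ → Ω → E := fun n ω ↦ ∑ j ∈ Finset.range n, X j ω
  have hBn (t : ℝ) : MeasurableSet (Prod.mk t ⁻¹' B) := hB.preimage measurable_prodMk_left
  have hcover : stoppedTimeAndSum X G ⁻¹' B ⊆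
      (⋂ i, notStoppedBy X G i) ∪ ⋃ n, S n ⁻¹' (stoppingHull X G n ∩ Prod.mk (n : ℝ) ⁻¹' B) := by
    intro ω hω
    by_cases h : ∃ n, S n ω ∈ stoppingHull X G n
    · refine Or.inr (mem_iUnion.2 ⟨Nat.find h, Nat.find_spec h, ?_⟩)
      rwa [mem_preimage, stoppedTimeAndSum_eq (Nat.find_spec h) fun m hm ↦ Nat.find_min h hm]
        at hω
    · exact Or.inl (mem_iInter.2 fun i n _ hn ↦ h ⟨n, hn⟩)
  refine measure_mono_null hcover (measure_union_null ?_ (measure_iUnion_null fun n ↦ ?_))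
  · exact nonpos_iff_eq_zero.1 <| ge_of_tendsto' (ENNReal.tendsto_atTop_zero_of_tsum_ne_top hsum)
      fun i ↦ measure_mono (iInter_subset _ i)
  · have hSn : Measurable (S n) := Finset.measurable_fun_sum _ fun j _ ↦ hX j
    rw [stoppingHull, ← Measure.map_apply hSn ((measurableSet_toMeasurable _ _).inter (hBn n)),
      Measure.measure_toMeasurable_inter (hBn n) (measure_ne_top _ _)]
    exact measure_mono_null (fun s hs ↦ disjoint_left.1 hBR hs.2 (hGR n s hs.1)) measure_empty

end StoppingRegion

section Wald

variable {Ω E : Type*} [MeasureSpace Ω] [IsProbabilityMeasure (ℙ : Measure Ω)]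
  [NormedAddCommGroup E] [NormedSpace ℝ E] [CompleteSpace E] [MeasurableSpace E] [BorelSpace E]
  [SecondCountableTopology E] {X : ℕ → Ω → E} {G : ℕ → Set E}

theorem integrable_stoppedTimeAndSum_and_integral (hX : ∀ i, Measurable (X i))
    (hindep : iIndepFun X ℙ)
    (hident : ∀ i, Measure.map (X i) ℙ = Measure.map (X 0) ℙ) (hint : Integrable (X 0))
    (hsum : ∑' i, ℙ (notStoppedBy X G i) ≠ ∞) :
    Integrable (stoppedTimeAndSum X G) ∧ ∫ ω, stoppedTimeAndSum X G ω =
      ((∑' i, ℙ (notStoppedBy X G i)).toReal,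
        (∑' i, ℙ (notStoppedBy X G i)).toReal • ∫ ω, X 0 ω) := by
  have hg : Measurable fun x : E ↦ ((1 : ℝ), x) := measurable_const.prodMk measurable_id
  have hindepY i : Indep (⨆ j ∈ Iio i, .comap (X j) ‹_›)
      (.comap (fun ω ↦ ((1 : ℝ), X i ω)) inferInstance) ℙ :=
    indep_of_indep_of_le_right (hindep.indep_iSup_comap_Iio hX i)
      (MeasurableSpace.comap_comp.symm.trans_le (MeasurableSpace.comap_mono hg.comap_le))
  have hidentY i : Measure.map (fun ω ↦ ((1 : ℝ), X i ω)) ℙ =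
      Measure.map (fun ω ↦ ((1 : ℝ), X 0 ω)) ℙ :=
    (Measure.map_map hg (hX i)).symm.trans <|
      (congrArg (Measure.map _) (hident i)).trans (Measure.map_map hg (hX 0))
  obtain ⟨hZint, hZ⟩ := integrable_tsum_indicator_and_integral_of_indep
    (Y := fun i ω ↦ ((1 : ℝ), X i ω))
    (fun i ↦ iSup₂_le fun j _ ↦ (hX j).comap_le) measurableSet_notStoppedBy
    (fun i ↦ hg.comp (hX i)) hindepY hidentY ((integrable_const 1).prodMk hint) hsum
  refine ⟨hZint, ?_⟩
  unfold stoppedTimeAndSum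
  rw [hZ, integral_pair (integrable_const 1) hint]
  simp

end Wald

theorem convex_stopping_region_lower_bound {Ω : Type*} [MeasureSpace Ω]
    [IsProbabilityMeasure (ℙ : Measure Ω)] {d : ℕ}
    (X : ℕ → Ω → Fin d → ℝ) (μ : Fin d → ℝ)
    (hmeas : ∀ i, Measurable (X i))
    (hint : ∀ i, Integrable (X i))
    (hindep : iIndepFun X ℙ)
    (hident : ∀ i, Measure.map (X i) ℙ = Measure.map (X 0) ℙ)
    (hmean : ∀ i, (∫ ω, X i ω) = μ)
    (𝒩 : Set ℕ) (R : Set (ℝ × (Fin d → ℝ))) (hR : Convex ℝ R)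
    (N : Ω → ℝ≥0∞)
    (hN : ∀ ω, N ω = ⨅ (n : ℕ) (_ : n ∈ 𝒩 ∧
      ((n : ℝ), ∑ i ∈ Finset.range n, X i ω) ∈ R), (n : ℝ≥0∞)) :
    ({t : ℝ | 0 ≤ t ∧ (t, t • μ) ∈ R}.Nonempty →
      ENNReal.ofReal (sInf {t : ℝ | 0 ≤ t ∧ (t, t • μ) ∈ R}) ≤ ∫⁻ ω, N ω) ∧
    ({t : ℝ | 0 ≤ t ∧ (t, t • μ) ∈ R} = ∅ → ∫⁻ ω, N ω = ⊤) := by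
  obtain rfl : N = _ := funext hN
  set G : ℕ → Set (Fin d → ℝ) := fun n ↦ {s | n ∈ 𝒩 ∧ ((n : ℝ), s) ∈ R}
  set m := ∑' i, ℙ (notStoppedBy X G i)
  have hm_le : m ≤ ∫⁻ ω, ⨅ (n : ℕ) (_ : ∑ j ∈ Finset.range n, X j ω ∈ G n), (n : ℝ≥0∞) :=
    tsum_measure_notStoppedBy_le_lintegral hmeas
  have hmem (hfin : m ≠ ∞) : (m.toReal, m.toReal • μ) ∈ R := by
    obtain ⟨hZint, hZ⟩ :=
      integrable_stoppedTimeAndSum_and_integral hmeas hindep hident (hint 0) hfin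
    have hconc := innerConcentrated_map_stoppedTimeAndSum hmeas (fun n s hs ↦ hs.2) hfin
      hZint.aemeasurable
    simpa only [hZ, hmean 0] using hconc.integral_mem hR hZint
  refine ⟨fun _ ↦ ?_, fun hempty ↦ ?_⟩
  · rcases eq_or_ne m ∞ with h | h
    · exact le_top.trans_eq (top_le_iff.1 (h ▸ hm_le)).symm
    · calc ENNReal.ofReal (sInf {t : ℝ | 0 ≤ t ∧ (t, t • μ) ∈ R})
          ≤ ENNReal.ofReal m.toReal := ENNReal.ofReal_le_ofReal <|
            csInf_le ⟨0, fun _ ht ↦ ht.1⟩ ⟨ENNReal.toReal_nonneg, hmem h⟩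
        _ ≤ _ := by rwa [ENNReal.ofReal_toReal h]
  · by_contra hfin
    exact hempty.subset ⟨ENNReal.toReal_nonneg, hmem (ne_top_of_le_ne_top hfin hm_le)⟩
end
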